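/- arXiv:1701.02004 — 3 statements merged into one kernel-verified Lean document; each statement's English description precedes it below -/
import Mathlib

section
/- Let $M$ be a topological space, $(Y, d)$ a proper metric space (closed bounded sets are compact), $T > 0$, and $F : M \times [0,T] \to Y$ a continuous proper map. Let $u : M \times [0,T] \to \mathbb{R}$ be continuous and suppose there are constants $B > 0$ and $\alpha \in [0,1)$ and a point $y_0 \in Y$ such that $u(x,t) \leq B\,(1 + d(y_0, F(x,t))^{\alpha})$ for all $(x,t)$. Suppose moreover that $u(x,0) \leq 0$ for all $x \in M$. Let $\varepsilon > 0$ and suppose there exists $(y,s) \in M \times [0,T]$ with $u(y,s) - \varepsilon\, d(y_0, F(y,s))^2 > 0$. Then the function $u_{\varepsilon}(x,t) := u(x,t) - \varepsilon\, d(y_0, F(x,t))^2$ attains a maximum over $M \times [0,T]$ at some point $(x_0, t_0)$, and necessarily $t_0 > 0$ and $u_{\varepsilon}(x_0,t_0) > 0$. -/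
/-- Penalization step in the proof of the parabolic Omori-Yau maximum principle:
the penalized function `u - ε d(y₀, F(·,·))²` attains its maximum, at a positive time,
with positive maximum value. -/
theorem stmt_1 {M : Type*} [TopologicalSpace M]
    {Y : Type*} [MetricSpace Y] [ProperSpace Y]
    (T : ℝ) (hT : 0 < T)
    (F : M × Set.Icc (0 : ℝ) T → Y)
    (hFcont : Continuous F) (hFproper : IsProperMap F)
    (u : M × Set.Icc (0 : ℝ) T → ℝ) (hucont : Continuous u)
    (B : ℝ) (hB : 0 < B) (α : ℝ) (hα0 : 0 ≤ α) (hα1 : α < 1) (y₀ : Y)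
    (hgrowth : ∀ p : M × Set.Icc (0 : ℝ) T,
      u p ≤ B * (1 + dist y₀ (F p) ^ α))
    (hinit : ∀ x : M, u (x, ⟨0, Set.left_mem_Icc.mpr hT.le⟩) ≤ 0)
    (ε : ℝ) (hε : 0 < ε)
    (hpos : ∃ q : M × Set.Icc (0 : ℝ) T, 0 < u q - ε * dist y₀ (F q) ^ 2) :
    ∃ p₀ : M × Set.Icc (0 : ℝ) T,
      (∀ p : M × Set.Icc (0 : ℝ) T,
        u p - ε * dist y₀ (F p) ^ 2 ≤ u p₀ - ε * dist y₀ (F p₀) ^ 2) ∧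
      0 < (p₀.2 : ℝ) ∧
      0 < u p₀ - ε * dist y₀ (F p₀) ^ 2 := by
  obtain ⟨q, hq⟩ := hpos
  set g : M × Set.Icc (0 : ℝ) T → ℝ := fun p => u p - ε * dist y₀ (F p) ^ 2 with hg
  have hgcont : Continuous g :=
    hucont.sub (continuous_const.mul ((continuous_const.dist hFcont).pow 2))
  set R : ℝ := max 1 (2 * B / ε) with hR
  have hR1 : (1 : ℝ) ≤ R := le_max_left _ _
  -- outside the ball of radius R, g ≤ 0
  have hout : ∀ p : M × Set.Icc (0 : ℝ) T, R ≤ dist y₀ (F p) → g p ≤ 0 := by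
    intro p hp
    have hr1 : (1 : ℝ) ≤ dist y₀ (F p) := hR1.trans hp
    have hrpow : dist y₀ (F p) ^ α ≤ dist y₀ (F p) := by
      calc dist y₀ (F p) ^ α ≤ dist y₀ (F p) ^ (1 : ℝ) :=
            Real.rpow_le_rpow_of_exponent_le hr1 hα1.le
        _ = dist y₀ (F p) := Real.rpow_one _
    have h1 : u p ≤ B * (1 + dist y₀ (F p)) :=
      (hgrowth p).trans (by nlinarith)
    have h2 : 2 * B * dist y₀ (F p) ≤ ε * dist y₀ (F p) ^ 2 := by
      have : 2 * B / ε ≤ dist y₀ (F p) := (le_max_right _ _).trans hp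
      have := mul_le_mul_of_nonneg_right this (dist_nonneg (x := y₀) (y := F p))
      rw [div_mul_eq_mul_div, div_le_iff₀ hε] at this
      nlinarith
    simp only [hg]
    nlinarith
  have hqR : dist y₀ (F q) < R := by
    by_contra h
    exact absurd (hout q (not_lt.mp h)) (not_le.mpr hq)
  -- compact set
  have hK : IsCompact (F ⁻¹' Metric.closedBall y₀ R) :=
    hFproper.isCompact_preimage (isCompact_closedBall y₀ R)
  have hqK : q ∈ F ⁻¹' Metric.closedBall y₀ R := by
    simp [Metric.mem_closedBall, dist_comm, hqR.le]
  obtain ⟨p₀, hp₀K, hp₀max⟩ := hK.exists_isMaxOn ⟨q, hqK⟩ hgcont.continuousOn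
  have hgq : g q ≤ g p₀ := hp₀max hqK
  have hp₀pos : 0 < g p₀ := lt_of_lt_of_le hq hgq
  have hmax : ∀ p, g p ≤ g p₀ := by
    intro p
    by_cases hp : p ∈ F ⁻¹' Metric.closedBall y₀ R
    · exact hp₀max hp
    · have : R ≤ dist y₀ (F p) := by
        simp only [Set.mem_preimage, Metric.mem_closedBall, not_le, dist_comm] at hp
        exact hp.le
      exact (hout p this).trans hp₀pos.le
  refine ⟨p₀, hmax, ?_, hp₀pos⟩
  rcases lt_or_eq_of_le p₀.2.2.1 with h | h
  · exact h
  · exfalso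
    have hp₀ : p₀ = (p₀.1, ⟨0, Set.left_mem_Icc.mpr hT.le⟩) := by
      ext
      · rfl
      · exact h.symm
    have := hinit p₀.1
    rw [← hp₀] at this
    have : g p₀ ≤ 0 := by
      simp only [hg]
      nlinarith [sq_nonneg (dist y₀ (F p₀)), dist_nonneg (x := y₀) (y := F p₀)]
    linarith
end

section
/- Let $M$ be a topological space, $(Y, d)$ a proper metric space, $T > 0$, and $F : M \times [0,T] \to Y$ a continuous proper map. Let $u : M \times [0,T] \to \mathbb{R}$ be continuous with $\sup_{M \times [0,T]} u > 0 \geq \sup_{x \in M} u(x,0)$, and suppose there are constants $B > 0$, $\alpha \in [0,1)$ and a point $y_0 \in Y$ such that $u(x,t) \leq B\,(1 + d(y_0, F(x,t))^{\alpha})$ for all $(x,t)$. Then there exist a sequence $\varepsilon_i > 0$ with $\varepsilon_i \to 0$ and points $(x_i, t_i) \in M \times (0,T]$ such that: (i) $(x_i,t_i)$ maximizes $u - \varepsilon_i\, d(y_0, F(\cdot,\cdot))^2$ over $M \times [0,T]$; (ii) $u(x_i, t_i) \to \sup_{M \times [0,T]} u$; and (iii) $\varepsilon_i\,\bigl(1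 + d(y_0, F(x_i,t_i))\bigr) \to 0$ as $i \to \infty$. -/
open Filter Topology

/-!
Pick a maximizing sequence `qₙ` with `u qₙ > 0` and penalties `εₙ → 0` so small that
`εₙ d(y₀, F qₙ)² < min (u qₙ) (1/(n+1))`. Since `F` is proper and `u` grows at most linearly
in `d(y₀, F ·)`, the penalized function `u - εₙ d(y₀, F ·)²` tends to `-∞` at infinity and so
attains its maximum at some `pₙ`; comparing with `qₙ` shows that the maximum is positive
(hence `pₙ` is not at time `0`) and that `u pₙ ≥ u qₙ - 1/(n+1)`. Finally, positivity of the
maximum gives `εₙ dₙ² ≤ u pₙ ≤ 2B dₙ^α` when `dₙ ≥ 1`, i.e. `εₙ dₙ^(2-α) ≤ 2B`, whence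
`εₙ dₙ ≤ (2B)^(1/(2-α)) εₙ^(1 - 1/(2-α)) → 0` because `α < 1`.
-/

lemma Real.rpow_le_one_add {d α : ℝ} (hd : 0 ≤ d) (hα0 : 0 ≤ α) (hα1 : α ≤ 1) :
    d ^ α ≤ 1 + d := by
  rcases le_total d 1 with hd1 | hd1
  · linarith [Real.rpow_le_one hd hd1 hα0]
  · linarith [Real.rpow_le_self_of_one_le hd1 hα1]

lemma mul_le_of_mul_rpow_le {ε d C γ : ℝ} (hε : 0 < ε) (hd : 0 ≤ d) (hγ : 0 < γ)
    (h : ε * d ^ γ ≤ C) : ε * d ≤ C ^ γ⁻¹ * ε ^ (1 - γ⁻¹) := by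
  have hC : 0 ≤ C := (mul_nonneg hε.le (Real.rpow_nonneg hd γ)).trans h
  have hdγ : d ^ γ ≤ C / ε := by rw [le_div_iff₀ hε]; linarith
  calc ε * d = ε * (d ^ γ) ^ γ⁻¹ := by
        rw [← Real.rpow_mul hd, mul_inv_cancel₀ hγ.ne', Real.rpow_one]
    _ ≤ ε * (C / ε) ^ γ⁻¹ := by gcongr
    _ = C ^ γ⁻¹ * ε ^ (1 - γ⁻¹) := by
      rw [Real.div_rpow hC hε.le, Real.rpow_sub hε, Real.rpow_one]
      field_simp

lemma mul_one_add_le_of_mul_sq_le {ε d B α : ℝ} (hε : 0 < ε) (hd : 0 ≤ d) (hα0 : 0 ≤ α)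
    (hα2 : α < 2) (h : ε * d ^ 2 ≤ B * (1 + d ^ α)) :
    ε * (1 + d) ≤ 2 * ε + (2 * B) ^ (2 - α)⁻¹ * ε ^ (1 - (2 - α)⁻¹) := by
  have hB : 0 ≤ B := nonneg_of_mul_nonneg_left ((mul_nonneg hε.le (sq_nonneg d)).trans h)
    (by positivity)
  have hpow : 0 ≤ (2 * B) ^ (2 - α)⁻¹ * ε ^ (1 - (2 - α)⁻¹) := by positivity
  rcases le_total d 1 with hd1 | hd1
  · nlinarith
  have hdα : 1 ≤ d ^ α := Real.one_le_rpow hd1 hα0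
  have hsplit : d ^ 2 = d ^ α * d ^ (2 - α) := by
    rw [← Real.rpow_add (by linarith), add_sub_cancel, Real.rpow_two]
  have key : ε * d ^ (2 - α) ≤ 2 * B := by
    refine le_of_mul_le_mul_right ?_ (zero_lt_one.trans_le hdα)
    nlinarith
  nlinarith [mul_le_of_mul_rpow_le hε hd (by linarith) key]

lemma tendsto_mul_one_add_of_mul_sq_le {ι : Type*} {l : Filter ι} {ε d : ι → ℝ} {B α : ℝ}
    (hε : ∀ i, 0 < ε i) (hε0 : Tendsto ε l (𝓝 0)) (hd : ∀ i, 0 ≤ d i) (hα0 : 0 ≤ α)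
    (hα1 : α < 1) (h : ∀ i, ε i * d i ^ 2 ≤ B * (1 + d i ^ α)) :
    Tendsto (fun i ↦ ε i * (1 + d i)) l (𝓝 0) := by
  have hexp : 0 < 1 - (2 - α)⁻¹ := by
    rw [sub_pos]; exact inv_lt_one_of_one_lt₀ (by linarith)
  have hbound :
      Tendsto (fun i ↦ 2 * ε i + (2 * B) ^ (2 - α)⁻¹ * ε i ^ (1 - (2 - α)⁻¹)) l (𝓝 0) := by
    simpa [Real.zero_rpow hexp.ne'] using
      (hε0.const_mul 2).add ((hε0.rpow_const (.inr hexp.le)).const_mul ((2 * B) ^ (2 - α)⁻¹))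
  exact squeeze_zero (fun i ↦ mul_nonneg (hε i).le (by linarith [hd i]))
    (fun i ↦ mul_one_add_le_of_mul_sq_le (hε i) (hd i) hα0 (by linarith) (h i)) hbound

lemma IsProperMap.tendsto_cocompact {X Y : Type*} [TopologicalSpace X] [TopologicalSpace Y]
    {f : X → Y} (hf : IsProperMap f) : Tendsto f (cocompact X) (cocompact Y) :=
  hasBasis_cocompact.tendsto_right_iff.2 fun _ hK ↦
    (hf.isCompact_preimage hK).compl_mem_cocompact

lemma tendsto_sub_mul_sq_atBot {ι : Type*} {l : Filter ι} {f g : ι → ℝ} {A B ε : ℝ}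
    (hε : 0 < ε) (hf : ∀ i, f i ≤ A + B * g i) (hg : Tendsto g l atTop) :
    Tendsto (fun i ↦ f i - ε * g i ^ 2) l atBot := by
  have hlin : Tendsto (fun i ↦ B - ε * g i) l atBot :=
    tendsto_atBot_add_const_left _ B (tendsto_neg_atTop_atBot.comp (hg.const_mul_atTop hε))
  refine tendsto_atBot_mono (fun i ↦ ?_)
    (tendsto_atBot_add_const_left _ A (hg.atTop_mul_atBot₀ hlin))
  nlinarith [hf i]

theorem exists_forall_sub_mul_dist_sq_le {X Y : Type*} [TopologicalSpace X] [Nonempty X]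
    [MetricSpace Y] [ProperSpace Y] {F : X → Y} (hF : IsProperMap F) {u : X → ℝ}
    (hu : Continuous u) {A B : ℝ} (y₀ : Y) (hgrowth : ∀ x, u x ≤ A + B * dist y₀ (F x))
    {ε : ℝ} (hε : 0 < ε) :
    ∃ p, ∀ q, u q - ε * dist y₀ (F q) ^ 2 ≤ u p - ε * dist y₀ (F p) ^ 2 := by
  obtain ⟨x₀⟩ := ‹Nonempty X›
  have hdist := (tendsto_dist_left_cocompact_atTop y₀).comp hF.tendsto_cocompact
  have hcont : Continuous fun q ↦ u q - ε * dist y₀ (F q) ^ 2 :=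
    hu.sub (continuous_const.mul ((continuous_const.dist hF.continuous).pow 2))
  exact hcont.exists_forall_ge' x₀
    ((tendsto_sub_mul_sq_atBot hε hgrowth hdist).eventually_le_atBot _)

theorem exists_seq_tendsto_iSup_of_lt {α ι : Type*} [CompleteLinearOrder α] [TopologicalSpace α]
    [OrderTopology α] [FirstCountableTopology α] {f : ι → α} {c : α} (hc : c < ⨆ i, f i) :
    ∃ q : ℕ → ι, (∀ n, c < f (q n)) ∧ Tendsto (fun n ↦ f (q n)) atTop (𝓝 (⨆ i, f i)) := by
  obtain ⟨i₀, -⟩ := lt_iSup_iff.1 hc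
  obtain ⟨v, hv_mono, -, hv_lim, hv_mem⟩ :=
    (isLUB_iSup (f := f)).exists_seq_monotone_tendsto ⟨f i₀, i₀, rfl⟩
  choose q hq using hv_mem
  obtain ⟨N, hN⟩ := (hv_lim.eventually (eventually_gt_nhds hc)).exists
  refine ⟨fun n ↦ q (n + N), fun n ↦ ?_, ?_⟩
  · rw [hq]
    exact hN.trans_le (hv_mono (Nat.le_add_left N n))
  · simp only [hq]
    exact hv_lim.comp (tendsto_add_atTop_nat N)

theorem EReal.tendsto_coe_of_sub_le {ι : Type*} {l : Filter ι} {a b δ : ι → ℝ} {S : EReal}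
    (ha : Tendsto (fun i ↦ (a i : EReal)) l (𝓝 S)) (hδ : Tendsto δ l (𝓝 0))
    (hab : ∀ i, a i - δ i ≤ b i) (hbS : ∀ i, (b i : EReal) ≤ S) :
    Tendsto (fun i ↦ (b i : EReal)) l (𝓝 S) := by
  have hδ' : Tendsto (fun i ↦ -(δ i : EReal)) l (𝓝 0) := by
    simpa using EReal.tendsto_coe.2 hδ.neg
  have hsub : Tendsto (fun i ↦ ((a i - δ i : ℝ) : EReal)) l (𝓝 S) := by
    have := (EReal.continuousAt_add (p := (S, 0)) (.inr (by simp)) (.inr (by simp))).tendsto.comp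
      (ha.prodMk_nhds hδ')
    simpa [sub_eq_add_neg, Function.comp_def] using this
  exact tendsto_of_tendsto_of_tendsto_of_le_of_le hsub tendsto_const_nhds
    (fun i ↦ EReal.coe_le_coe_iff.2 (hab i)) hbS

lemma exists_pos_tendsto_zero_mul_sq_lt {ι : Type*} {l : Filter ι} (D δ : ι → ℝ)
    (hδ : ∀ i, 0 < δ i) (hδ0 : Tendsto δ l (𝓝 0)) :
    ∃ ε : ι → ℝ, (∀ i, 0 < ε i) ∧ Tendsto ε l (𝓝 0) ∧ ∀ i, ε i * D i ^ 2 < δ i := by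
  have hD : ∀ i, 0 < 1 + D i ^ 2 := fun i ↦ by positivity
  refine ⟨fun i ↦ δ i / (1 + D i ^ 2), fun i ↦ div_pos (hδ i) (hD i), ?_, fun i ↦ ?_⟩
  · refine squeeze_zero (fun i ↦ (div_pos (hδ i) (hD i)).le) (fun i ↦ ?_) hδ0
    exact div_le_self (hδ i).le (by nlinarith [sq_nonneg (D i)])
  · rw [div_mul_eq_mul_div, div_lt_iff₀ (hD i)]
    nlinarith [hδ i]

theorem exists_penalized_maximizers {X Y : Type*} [TopologicalSpace X] [MetricSpace Y]
    [ProperSpace Y] {F : X → Y} (hF : IsProperMap F) {u : X → ℝ} (hu : Continuous u) {A B : ℝ}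
    (y₀ : Y) (hgrowth : ∀ x, u x ≤ A + B * dist y₀ (F x)) (hsup : 0 < ⨆ x, (u x : EReal)) :
    ∃ (ε : ℕ → ℝ) (p : ℕ → X), (∀ n, 0 < ε n) ∧ Tendsto ε atTop (𝓝 0) ∧
      (∀ n q, u q - ε n * dist y₀ (F q) ^ 2 ≤ u (p n) - ε n * dist y₀ (F (p n)) ^ 2) ∧
      (∀ n, ε n * dist y₀ (F (p n)) ^ 2 < u (p n)) ∧
      Tendsto (fun n ↦ (u (p n) : EReal)) atTop (𝓝 (⨆ x, (u x : EReal))) := by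
  obtain ⟨q, hq_pos, hq_lim⟩ := exists_seq_tendsto_iSup_of_lt hsup
  have : Nonempty X := ⟨q 0⟩
  set δ : ℕ → ℝ := fun n ↦ min (u (q n)) (1 / (n + 1))
  have hδ : ∀ n, 0 < δ n := fun n ↦ lt_min (EReal.coe_pos.1 (hq_pos n)) Nat.one_div_pos_of_nat
  have hδ0 : Tendsto δ atTop (𝓝 0) :=
    squeeze_zero (fun n ↦ (hδ n).le) (fun n ↦ min_le_right _ _)
      tendsto_one_div_add_atTop_nhds_zero_nat
  obtain ⟨ε, hε, hε0, hεδ⟩ :=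
    exists_pos_tendsto_zero_mul_sq_lt (fun n ↦ dist y₀ (F (q n))) δ hδ hδ0
  choose p hp using fun n ↦ exists_forall_sub_mul_dist_sq_le hF hu y₀ hgrowth (hε n)
  have hgap : ∀ n, u (q n) - δ n < u (p n) - ε n * dist y₀ (F (p n)) ^ 2 :=
    fun n ↦ (sub_lt_sub_left (hεδ n) _).trans_le (hp n (q n))
  refine ⟨ε, p, hε, hε0, hp, fun n ↦ ?_, EReal.tendsto_coe_of_sub_le hq_lim hδ0 (fun n ↦ ?_)
    fun n ↦ le_iSup (fun x ↦ (u x : EReal)) (p n)⟩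
  · linarith [hgap n, min_le_left (u (q n)) (1 / (n + 1))]
  · nlinarith [hgap n, mul_nonneg (hε n).le (sq_nonneg (dist y₀ (F (p n))))]

theorem stmt_2_general {M : Type*} [TopologicalSpace M]
    {Y : Type*} [MetricSpace Y] [ProperSpace Y]
    (T : ℝ) (hT : 0 < T)
    (F : M × Set.Icc (0 : ℝ) T → Y)
    (hFproper : IsProperMap F)
    (u : M × Set.Icc (0 : ℝ) T → ℝ) (hucont : Continuous u)
    (hsup : 0 < ⨆ p : M × Set.Icc (0 : ℝ) T, (u p : EReal))
    (hinit : ∀ x : M, u (x, ⟨0, Set.left_mem_Icc.mpr hT.le⟩) ≤ 0)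
    (B : ℝ) (hB : 0 < B) (α : ℝ) (hα0 : 0 ≤ α) (hα1 : α < 1) (y₀ : Y)
    (hgrowth : ∀ p : M × Set.Icc (0 : ℝ) T,
      u p ≤ B * (1 + dist y₀ (F p) ^ α)) :
    ∃ (ε : ℕ → ℝ) (p : ℕ → M × Set.Icc (0 : ℝ) T),
      (∀ i, 0 < ε i) ∧ Tendsto ε atTop (𝓝 0) ∧
      (∀ i, 0 < ((p i).2 : ℝ)) ∧
      (∀ i, ∀ q : M × Set.Icc (0 : ℝ) T,
        u q - ε i * dist y₀ (F q) ^ 2 ≤ u (p i) - ε i * dist y₀ (F (p i)) ^ 2) ∧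
      Tendsto (fun i => (u (p i) : EReal)) atTop
        (𝓝 (⨆ q : M × Set.Icc (0 : ℝ) T, (u q : EReal))) ∧
      Tendsto (fun i => ε i * (1 + dist y₀ (F (p i)))) atTop (𝓝 0) := by
  have hlinear : ∀ p, u p ≤ 2 * B + B * dist y₀ (F p) := fun p ↦ by
    nlinarith [hgrowth p, Real.rpow_le_one_add (dist_nonneg (x := y₀) (y := F p)) hα0 hα1.le]
  obtain ⟨ε, p, hε, hε0, hmax, hpen, hlim⟩ :=
    exists_penalized_maximizers hFproper hucont y₀ hlinear hsup
  refine ⟨ε, p, hε, hε0, fun n ↦ ?_, hmax, hlim, tendsto_mul_one_add_of_mul_sq_le hε hε0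
    (fun _ ↦ dist_nonneg) hα0 hα1 fun n ↦ (hpen n).le.trans (hgrowth (p n))⟩
  have hpos : 0 < u (p n) := (mul_nonneg (hε n).le (sq_nonneg _)).trans_lt (hpen n)
  refine (p n).2.2.1.lt_of_ne fun h0 ↦ (hinit (p n).1).not_gt ?_
  rwa [show ((p n).1, ⟨0, _⟩) = p n from Prod.ext rfl (Subtype.ext h0)]

/-- Metric-space core of the parabolic Omori-Yau maximum principle (Theorem 1.2):
there are penalization parameters `εᵢ → 0` and penalized maximizers `(xᵢ, tᵢ)`
occurring at positive times, realizing `sup u` in the limit, and with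
`εᵢ (1 + d(y₀, F(xᵢ,tᵢ))) → 0`. -/
theorem stmt_2 {M : Type*} [TopologicalSpace M]
    {Y : Type*} [MetricSpace Y] [ProperSpace Y]
    (T : ℝ) (hT : 0 < T)
    (F : M × Set.Icc (0 : ℝ) T → Y)
    (hFcont : Continuous F) (hFproper : IsProperMap F)
    (u : M × Set.Icc (0 : ℝ) T → ℝ) (hucont : Continuous u)
    (hsup : 0 < ⨆ p : M × Set.Icc (0 : ℝ) T, (u p : EReal))
    (hinit : ∀ x : M, u (x, ⟨0, Set.left_mem_Icc.mpr hT.le⟩) ≤ 0)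
    (B : ℝ) (hB : 0 < B) (α : ℝ) (hα0 : 0 ≤ α) (hα1 : α < 1) (y₀ : Y)
    (hgrowth : ∀ p : M × Set.Icc (0 : ℝ) T,
      u p ≤ B * (1 + dist y₀ (F p) ^ α)) :
    ∃ (ε : ℕ → ℝ) (p : ℕ → M × Set.Icc (0 : ℝ) T),
      (∀ i, 0 < ε i) ∧ Tendsto ε atTop (𝓝 0) ∧
      (∀ i, 0 < ((p i).2 : ℝ)) ∧
      (∀ i, ∀ q : M × Set.Icc (0 : ℝ) T,
        u q - ε i * dist y₀ (F q) ^ 2 ≤ u (p i) - ε i * dist y₀ (F (p i)) ^ 2) ∧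
      Tendsto (fun i => (u (p i) : EReal)) atTop
        (𝓝 (⨆ q : M × Set.Icc (0 : ℝ) T, (u q : EReal))) ∧
      Tendsto (fun i => ε i * (1 + dist y₀ (F (p i)))) atTop (𝓝 0) :=
  stmt_2_general T hT F hFproper u hucont hsup hinit B hB α hα0 hα1 y₀ hgrowth
end

section
/- Let $n \geq 1$ and define $f : \mathbb{R}^n \to \mathbb{R}$ by $f(x) = \sqrt{\lVert x \rVert^2 + 1}$ (Euclidean norm). Then for every sequence $(x_i)$ in $\mathbb{R}^n$ with $f(x_i) \to +\infty$, one has $\lVert \nabla f(x_i) \rVert \to 1$. In particular, there is no sequence $(x_i)$ in $\mathbb{R}^n$ such that $f(x_i) \to \sup_{\mathbb{R}^n} f$ (i.e., $f(x_i) \to +\infty$) and $\lVert \nabla f(x_i) \rVert \to 0$. -/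
/-!
The gradient of `f x = √(‖x‖² + 1)` is `x / f x`, so `‖∇f x‖² = ‖x‖² / (‖x‖² + 1) = 1 - f(x)⁻²`.
Hence `‖∇f‖` is a continuous function of `f` alone, tending to `1` as `f → +∞`; a sequence along
which `f → +∞` and `‖∇f‖ → 0` would force `1 = 0`.
-/

open Filter Topology InnerProductSpace

section

variable {E : Type*} [NormedAddCommGroup E] [InnerProductSpace ℝ E] [CompleteSpace E]

theorem hasGradientAt_sqrt_norm_sq_add_one (x : E) :
    HasGradientAt (fun y : E => √(‖y‖ ^ 2 + 1)) ((√(‖x‖ ^ 2 + 1))⁻¹ • x) x := by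
  have hs : √(‖x‖ ^ 2 + 1) ≠ 0 := by positivity
  have hderiv := ((hasStrictFDerivAt_norm_sq x).hasFDerivAt.add_const 1).sqrt
    (by positivity : ‖x‖ ^ 2 + 1 ≠ 0)
  rw [hasGradientAt_iff_hasFDerivAt]
  refine hderiv.congr_fderiv ?_
  ext y
  simp only [toDual_apply_apply, real_inner_smul_left, smul_apply,
    innerSL_apply_apply, smul_eq_mul, nsmul_eq_mul, Nat.cast_ofNat]
  field_simp

theorem norm_gradient_sqrt_norm_sq_add_one (x : E) :
    ‖gradient (fun y : E => √(‖y‖ ^ 2 + 1)) x‖ = √(1 - (√(‖x‖ ^ 2 + 1))⁻¹ ^ 2) := by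
  have hpos : 0 < ‖x‖ ^ 2 + 1 := by positivity
  rw [(hasGradientAt_sqrt_norm_sq_add_one x).gradient, norm_smul, norm_inv,
    Real.norm_of_nonneg (Real.sqrt_nonneg _), eq_comm,
    Real.sqrt_eq_iff_eq_sq _ (by positivity), mul_pow, inv_pow, Real.sq_sqrt hpos.le]
  · field_simp
    ring
  · rw [inv_pow, Real.sq_sqrt hpos.le, sub_nonneg]
    exact inv_le_one_of_one_le₀ (by simp)

end

theorem tendsto_sqrt_one_sub_inv_sq_atTop :
    Tendsto (fun s : ℝ => √(1 - s⁻¹ ^ 2)) atTop (𝓝 1) := by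
  have h := ((tendsto_inv_atTop_zero.pow 2).const_sub (1 : ℝ)).sqrt
  simpa using h

theorem stmt_6_general (n : ℕ)
    (f : EuclideanSpace ℝ (Fin n) → ℝ)
    (hf : ∀ x, f x = Real.sqrt (‖x‖ ^ 2 + 1)) :
    (∀ x : ℕ → EuclideanSpace ℝ (Fin n),
      Tendsto (fun i => f (x i)) atTop atTop →
      Tendsto (fun i => ‖gradient f (x i)‖) atTop (𝓝 1)) ∧
    ¬ ∃ x : ℕ → EuclideanSpace ℝ (Fin n),
      Tendsto (fun i => f (x i)) atTop atTop ∧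
      Tendsto (fun i => ‖gradient f (x i)‖) atTop (𝓝 0) := by
  obtain rfl : f = fun y => √(‖y‖ ^ 2 + 1) := funext hf
  have grad_tendsto_one : ∀ x : ℕ → EuclideanSpace ℝ (Fin n),
      Tendsto (fun i => √(‖x i‖ ^ 2 + 1)) atTop atTop →
      Tendsto (fun i => ‖gradient (fun y => √(‖y‖ ^ 2 + 1)) (x i)‖) atTop (𝓝 1) := by
    intro x hx
    simp only [norm_gradient_sqrt_norm_sq_add_one]
    exact tendsto_sqrt_one_sub_inv_sq_atTop.comp hx
  refine ⟨grad_tendsto_one, ?_⟩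
  rintro ⟨x, hx, hgrad⟩
  exact one_ne_zero (tendsto_nhds_unique (grad_tendsto_one x hx) hgrad)

/-- Optimality remark of Section 4: for `f(x) = √(‖x‖² + 1)` on `ℝⁿ`, along any
sequence with `f(xᵢ) → +∞` one has `‖∇f(xᵢ)‖ → 1`; in particular there is no
sequence with `f(xᵢ) → +∞` (i.e. `f(xᵢ) → sup f`) and `‖∇f(xᵢ)‖ → 0`. -/
theorem stmt_6 (n : ℕ) (hn : 1 ≤ n)
    (f : EuclideanSpace ℝ (Fin n) → ℝ)
    (hf : ∀ x, f x = Real.sqrt (‖x‖ ^ 2 + 1)) :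
    (∀ x : ℕ → EuclideanSpace ℝ (Fin n),
      Tendsto (fun i => f (x i)) atTop atTop →
      Tendsto (fun i => ‖gradient f (x i)‖) atTop (𝓝 1)) ∧
    ¬ ∃ x : ℕ → EuclideanSpace ℝ (Fin n),
      Tendsto (fun i => f (x i)) atTop atTop ∧
      Tendsto (fun i => ‖gradient f (x i)‖) atTop (𝓝 0) :=
  stmt_6_general n f hf
end
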